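/- Let α > 2β > 0, ρ = (α+√(α²−4β²))/(2β), and d_k = b_{k+1}/b_k with b_k as in the previous context. Then |√(β/ρ) − β/√(d_k)| < √β · ρ^{−k−1/2} for all k ≥ 1. -/

import Mathlib

/-!
With `q = ρ⁻²` the closed form reads `b_k = c · (βρ)^{k+1} (1 - q^{k+1})`, so
`β / √(d_k) = √(β/ρ) · √u` with `u = (1 - q^{k+1}) / (1 - q^{k+2}) ∈ (0, 1]`, while the bound
`√β · ρ^{-k-1/2}` is `√(β/ρ) · ρ^{-k}`. It remains to see `1 - √u ≤ 1 - u < q^{k+1} ≤ ρ^{-k}`;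
the strict step is `1 - u = q^{k+1} (1 - q) / (1 - q^{k+2})`.
-/

lemma one_lt_add_sqrt_div {α β : ℝ} (hβ : 0 < β) (hα : 2 * β < α) :
    1 < (α + √(α ^ 2 - 4 * β ^ 2)) / (2 * β) := by
  rw [one_lt_div (by positivity)]
  linarith [Real.sqrt_nonneg (α ^ 2 - 4 * β ^ 2)]

section GeometricRatio

variable {q : ℝ} (hq0 : 0 < q) (hq1 : q < 1) (n : ℕ)
include hq0 hq1

lemma one_sub_pow_succ_pos : 0 < 1 - q ^ (n + 1) :=
  sub_pos.2 (pow_lt_one₀ hq0.le hq1 n.succ_ne_zero)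

lemma one_sub_pow_div_one_sub_pow_succ_le_one :
    (1 - q ^ (n + 1)) / (1 - q ^ (n + 2)) ≤ 1 := by
  rw [div_le_one (one_sub_pow_succ_pos hq0 hq1 (n + 1))]
  exact sub_le_sub_left (pow_le_pow_of_le_one hq0.le hq1.le (n + 1).le_succ) 1

lemma one_sub_one_sub_pow_div_one_sub_pow_succ_lt :
    1 - (1 - q ^ (n + 1)) / (1 - q ^ (n + 2)) < q ^ (n + 1) := by
  have hden := one_sub_pow_succ_pos hq0 hq1 (n + 1)
  rw [one_sub_div hden.ne', div_lt_iff₀ hden]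
  have hlt : q ^ (n + 2) < q := pow_lt_self_of_lt_one₀ hq0 hq1 (by omega)
  have hpos := pow_pos hq0 (n + 1)
  rw [pow_succ q (n + 1)] at *
  nlinarith

end GeometricRatio

lemma div_eq_of_eq_mul_sub_pow {c β ρ : ℝ} (hc : c ≠ 0) (hβ : β ≠ 0) (hρ : 1 < ρ)
    {b : ℕ → ℝ} (hb : ∀ k, b k = c * ((β * ρ) ^ (k + 1) - (β / ρ) ^ (k + 1))) (k : ℕ) :
    b (k + 1) / b k = β * ρ / ((1 - (ρ⁻¹ ^ 2) ^ (k + 1)) / (1 - (ρ⁻¹ ^ 2) ^ (k + 2))) := by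
  have hρ0 : 0 < ρ := by linarith
  have hq0 : 0 < ρ⁻¹ ^ 2 := by positivity
  have hq1 : ρ⁻¹ ^ 2 < 1 := pow_lt_one₀ (by positivity) (inv_lt_one_of_one_lt₀ hρ) two_ne_zero
  have hb' : ∀ n, b n = c * (β * ρ) ^ (n + 1) * (1 - (ρ⁻¹ ^ 2) ^ (n + 1)) := by
    intro n
    rw [hb n, show β / ρ = β * ρ * ρ⁻¹ ^ 2 by field_simp, mul_pow]
    ring
  rw [hb', hb']
  have hk := (one_sub_pow_succ_pos hq0 hq1 k).ne'
  have hk' := (one_sub_pow_succ_pos hq0 hq1 (k + 1)).ne'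
  field_simp
  ring

lemma sqrt_mul_rpow_neg_sub_half {β ρ : ℝ} (hβ : 0 ≤ β) (hρ : 0 < ρ) (k : ℕ) :
    √β * ρ ^ (-(k : ℝ) - 1 / 2) = √(β / ρ) * ρ⁻¹ ^ k := by
  rw [sub_eq_add_neg, Real.rpow_add hρ, Real.rpow_neg hρ.le, Real.rpow_neg hρ.le,
    Real.rpow_natCast, ← Real.sqrt_eq_rpow, Real.sqrt_div hβ, inv_pow]
  ring

lemma div_sqrt_mul_div {β ρ u : ℝ} (hβ : 0 < β) (hρ : 0 < ρ) (hu : 0 < u) :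
    β / √(β * ρ / u) = √(β / ρ) * √u :=
  calc β / √(β * ρ / u) = √(β ^ 2 / (β * ρ / u)) := by
        rw [Real.sqrt_div' (β ^ 2) (by positivity), Real.sqrt_sq hβ.le]
    _ = √(β / ρ * u) := by congr 1; field_simp
    _ = √(β / ρ) * √u := Real.sqrt_mul (by positivity) u

/-- Convergence of the subdiagonal entries of the finite reverse Cholesky factor:
`|√(β/ρ) − β/√(d_k)| < √β · ρ^{−k−1/2}`. -/
theorem stmt_6 (α β : ℝ) (hβ : 0 < β) (hα : 2 * β < α)
    (ρ : ℝ) (hρ : ρ = (α + Real.sqrt (α ^ 2 - 4 * β ^ 2)) / (2 * β))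
    (b : ℕ → ℝ)
    (hb : ∀ k, b k = (1 / Real.sqrt (α ^ 2 - 4 * β ^ 2)) *
      ((β * ρ) ^ (k + 1) - (β / ρ) ^ (k + 1)))
    (d : ℕ → ℝ) (hd : ∀ k, d k = b (k + 1) / b k) :
    ∀ k : ℕ, 1 ≤ k →
      |Real.sqrt (β / ρ) - β / Real.sqrt (d k)| < Real.sqrt β * ρ ^ (-(k : ℝ) - 1 / 2) := by
  intro k _
  have hρ1 : 1 < ρ := hρ ▸ one_lt_add_sqrt_div hβ hα
  have hρ0 : 0 < ρ := by linarith
  have hρinv1 : ρ⁻¹ < 1 := inv_lt_one_of_one_lt₀ hρ1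
  have hc : 1 / √(α ^ 2 - 4 * β ^ 2) ≠ 0 := by
    have hdisc : 0 < α ^ 2 - 4 * β ^ 2 := by nlinarith
    positivity
  set q := ρ⁻¹ ^ 2
  have hq0 : 0 < q := by positivity
  have hq1 : q < 1 := pow_lt_one₀ (by positivity) hρinv1 two_ne_zero
  set u := (1 - q ^ (k + 1)) / (1 - q ^ (k + 2))
  have hu0 : 0 < u :=
    div_pos (one_sub_pow_succ_pos hq0 hq1 k) (one_sub_pow_succ_pos hq0 hq1 (k + 1))
  have hu1 : u ≤ 1 := one_sub_pow_div_one_sub_pow_succ_le_one hq0 hq1 k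
  have hdk : d k = β * ρ / u := (hd k).trans (div_eq_of_eq_mul_sub_pow hc hβ.ne' hρ1 hb k)
  rw [hdk, div_sqrt_mul_div hβ hρ0 hu0, sqrt_mul_rpow_neg_sub_half hβ.le hρ0, ← mul_one_sub,
    abs_of_nonneg (mul_nonneg (Real.sqrt_nonneg _) (sub_nonneg.2 (Real.sqrt_le_one.2 hu1))),
    mul_lt_mul_iff_right₀ (Real.sqrt_pos.2 (by positivity))]
  calc 1 - √u ≤ 1 - u := by linarith [Real.le_sqrt_self_iff.2 hu1]
    _ < q ^ (k + 1) := one_sub_one_sub_pow_div_one_sub_pow_succ_lt hq0 hq1 k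
    _ = ρ⁻¹ ^ (2 * (k + 1)) := (pow_mul _ _ _).symm
    _ ≤ ρ⁻¹ ^ k := pow_le_pow_of_le_one (by positivity) hρinv1.le (by omega)
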